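/- arXiv:math/0002215 — 3 statements merged into one kernel-verified Lean document; each statement's English description precedes it below -/
import Mathlib

section
/- In the extension of R_q^N (N odd) by the invertible elements r_i^{±1} (i = 0,…,n), the commutation relations x^j r_i = r_i x^j for |j| ≤ i, x^j r_i = q r_i x^j for j < -i, and x^j r_i = q^{-1} r_i x^j for j > i are consistent with the relations [r_i^2, x^j] determined by the defining relations of R_q^N; in particular, for N = 3 and i = 1, the relation r^2 x^j = x^j r^2 obtained by squaring x^j r = r x^j etc. agrees with the centrality of r^2 in R_q^3. -/
/-- Consistency of the extension of `R_q^3` by `r^{±1}`: for `N = 3` (so `n = 1`,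
`i = n = 1`) the commutation relations `x^j r = r x^j` (all `|j| ≤ 1`), upon
squaring, give that `r² = q^{-1/2}x^{-1}x^1 + (x^0)² + q^{1/2}x^1x^{-1}` commutes
with all the `x^j`, in agreement with the centrality of `r²` in `R_q^3` which
follows from the defining relations alone. -/
theorem r_extension_consistency_N3
    {A : Type*} [Ring A] [Algebra ℂ A] (s : ℂ) (hs : s ≠ 0)
    (xm x0 x1 r : A)
    (hrel1 : xm * x0 = (s ^ 2) • (x0 * xm))
    (hrel2 : x0 * x1 = (s ^ 2) • (x1 * x0))
    (hrel3 : x1 * xm - xm * x1 = (s - s⁻¹) • (x0 * x0))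
    (hr2 : r * r = s⁻¹ • (xm * x1) + x0 * x0 + s • (x1 * xm))
    (hrm : xm * r = r * xm) (hr0 : x0 * r = r * x0) (hr1 : x1 * r = r * x1) :
    ((r * r) * xm = xm * (r * r) ∧ (r * r) * x0 = x0 * (r * r) ∧
      (r * r) * x1 = x1 * (r * r)) ∧
    (∀ r2 : A, r2 = s⁻¹ • (xm * x1) + x0 * x0 + s • (x1 * xm) →
      r2 * xm = xm * r2 ∧ r2 * x0 = x0 * r2 ∧ r2 * x1 = x1 * r2) := by
  have h3 : xm * x1 = x1 * xm - (s - s⁻¹) • (x0 * x0) := by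
    rw [← hrel3]; abel
  have H1 : ∀ t : A, xm * (x0 * t) = (s ^ 2) • (x0 * (xm * t)) := fun t => by
    rw [← mul_assoc, hrel1, smul_mul_assoc, mul_assoc]
  have H2 : ∀ t : A, x0 * (x1 * t) = (s ^ 2) • (x1 * (x0 * t)) := fun t => by
    rw [← mul_assoc, hrel2, smul_mul_assoc, mul_assoc]
  have H3 : ∀ t : A, xm * (x1 * t) = x1 * (xm * t) - (s - s⁻¹) • (x0 * (x0 * t)) := fun t => by
    rw [← mul_assoc, h3, sub_mul, smul_mul_assoc, mul_assoc, mul_assoc]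
  constructor
  · refine ⟨?_, ?_, ?_⟩
    · rw [mul_assoc, ← hrm, ← mul_assoc, ← hrm, mul_assoc]
    · rw [mul_assoc, ← hr0, ← mul_assoc, ← hr0, mul_assoc]
    · rw [mul_assoc, ← hr1, ← mul_assoc, ← hr1, mul_assoc]
  · rintro r2 rfl
    refine ⟨?_, ?_, ?_⟩ <;>
    · simp only [h3, hrel1, hrel2, H1, H2, H3, mul_smul_comm, smul_mul_assoc, smul_add,
        smul_sub, mul_add, mul_sub, add_mul, sub_mul, smul_smul, mul_assoc]
      try (match_scalars <;> (try field_simp) <;> (try ring))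
end

section
/- Let e^i_a be an invertible matrix over an algebra satisfying the gTT-relations g^{ab} e^i_a e^j_b = g^{ij} Λ² and g_{ij} e^i_a e^j_b = g_{ab} Λ², where Λ is an invertible central-like element commuting with all e^i_a and g is an invertible scalar matrix. Then the inverse matrix θ^a_i satisfies g_{ab} θ^b_j θ^a_i = Λ^{-2} g_{ij} and g^{ij} θ^b_j θ^a_i = Λ^{-2} g^{ab}. -/
private lemma sum4_comm {A : Type*} [AddCommMonoid A] {N : ℕ}
    (f : Fin N → Fin N → Fin N → Fin N → A) :
    (∑ a, ∑ b, ∑ k, ∑ l, f a b k l) = ∑ k, ∑ l, ∑ a, ∑ b, f a b k l := by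
  calc (∑ a, ∑ b, ∑ k, ∑ l, f a b k l)
      = ∑ a, ∑ k, ∑ b, ∑ l, f a b k l :=
        Finset.sum_congr rfl fun a _ => Finset.sum_comm
    _ = ∑ k, ∑ a, ∑ b, ∑ l, f a b k l := Finset.sum_comm
    _ = ∑ k, ∑ a, ∑ l, ∑ b, f a b k l :=
        Finset.sum_congr rfl fun k _ =>
          Finset.sum_congr rfl fun a _ => Finset.sum_comm
    _ = ∑ k, ∑ l, ∑ a, ∑ b, f a b k l :=
        Finset.sum_congr rfl fun k _ => Finset.sum_comm

/-- If an invertible matrix `e^i_a` over an algebra satisfies the gTT-relations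
`g^{ab} e^i_a e^j_b = g^{ij} Λ²` and `g_{ij} e^i_a e^j_b = g_{ab} Λ²`, with `Λ`
invertible and commuting with all `e^i_a` and `g` an invertible scalar matrix,
then the inverse matrix `θ^a_i` satisfies `g_{ab} θ^b_j θ^a_i = Λ⁻² g_{ij}` and
`g^{ij} θ^b_j θ^a_i = Λ⁻² g^{ab}`. -/
theorem inverse_matrix_gTT
    {A : Type*} [Ring A] [Algebra ℂ A] {N : ℕ}
    (g gu : Matrix (Fin N) (Fin N) ℂ)
    (hg : g * gu = 1) (hg' : gu * g = 1)
    (e : Fin N → Fin N → A) (θ : Fin N → Fin N → A)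
    (hinv1 : ∀ i j : Fin N, (∑ a, e i a * θ a j) = if i = j then 1 else 0)
    (hinv2 : ∀ a b : Fin N, (∑ i, θ a i * e i b) = if a = b then 1 else 0)
    (Lam LamInv : A) (hLam : Lam * LamInv = 1) (hLam' : LamInv * Lam = 1)
    (hLamComm : ∀ i a : Fin N, Lam * e i a = e i a * Lam)
    (hgtt1 : ∀ i j : Fin N,
      (∑ a, ∑ b, gu a b • (e i a * e j b)) = gu i j • (Lam * Lam))
    (hgtt2 : ∀ a b : Fin N,
      (∑ i, ∑ j, g i j • (e i a * e j b)) = g a b • (Lam * Lam)) :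
    (∀ i j : Fin N,
      (∑ a, ∑ b, g a b • (θ b j * θ a i)) = g i j • (LamInv * LamInv)) ∧
    (∀ a b : Fin N,
      (∑ i, ∑ j, gu i j • (θ b j * θ a i)) = gu a b • (LamInv * LamInv)) := by
  have hLL : LamInv * LamInv * (Lam * Lam) = 1 := by
    calc LamInv * LamInv * (Lam * Lam) = LamInv * ((LamInv * Lam) * Lam) := by
          rw [mul_assoc, mul_assoc]
      _ = 1 := by rw [hLam', one_mul, hLam']
  have hLL' : Lam * Lam * (LamInv * LamInv) = 1 := by
    calc Lam * Lam * (LamInv * LamInv) = Lam * ((Lam * LamInv) * LamInv) := by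
          rw [mul_assoc, mul_assoc]
      _ = 1 := by rw [hLam, one_mul, hLam]
  constructor
  · intro i j
    have h1 : Lam * Lam * (∑ a, ∑ b, g a b • (θ b j * θ a i)) = g i j • (1 : A) := by
      calc Lam * Lam * (∑ a, ∑ b, g a b • (θ b j * θ a i))
          = ∑ a, ∑ b, (g a b • (Lam * Lam)) * (θ b j * θ a i) := by
            simp [Finset.mul_sum, smul_mul_assoc, mul_smul_comm]
        _ = ∑ a, ∑ b, (∑ k, ∑ l, g k l • (e k a * e l b)) * (θ b j * θ a i) := by
            simp_rw [hgtt2]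
        _ = ∑ a, ∑ b, ∑ k, ∑ l, g k l • (e k a * ((e l b * θ b j) * θ a i)) := by
            simp [Finset.sum_mul, smul_mul_assoc, mul_assoc]
        _ = ∑ k, ∑ l, ∑ a, ∑ b, g k l • (e k a * ((e l b * θ b j) * θ a i)) :=
            sum4_comm _
        _ = ∑ k, ∑ l, ∑ a, g k l • (e k a * ((∑ b, e l b * θ b j) * θ a i)) := by
            simp [Finset.smul_sum, Finset.mul_sum, Finset.sum_mul]
        _ = ∑ k, ∑ a, ∑ l, g k l • (e k a * ((∑ b, e l b * θ b j) * θ a i)) :=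
            Finset.sum_congr rfl fun k _ => Finset.sum_comm
        _ = g i j • (1 : A) := by
            simp_rw [hinv1]
            simp only [mul_ite, ite_mul, mul_one, one_mul, mul_zero, zero_mul,
              smul_ite, smul_zero, Finset.sum_ite_eq, Finset.sum_ite_eq',
              Finset.mem_univ, if_true]
            simp_rw [← Finset.smul_sum, hinv1]
            simp [Finset.sum_ite_eq, Finset.sum_ite_eq']
    calc (∑ a, ∑ b, g a b • (θ b j * θ a i))
        = (LamInv * LamInv) * (Lam * Lam * (∑ a, ∑ b, g a b • (θ b j * θ a i))) := by
          rw [← mul_assoc, hLL, one_mul]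
      _ = g i j • (LamInv * LamInv) := by rw [h1]; simp [mul_smul_comm]
  · intro a b
    have h1 : (∑ i, ∑ j, gu i j • (θ b j * θ a i)) * (Lam * Lam) = gu a b • (1 : A) := by
      calc (∑ i, ∑ j, gu i j • (θ b j * θ a i)) * (Lam * Lam)
          = ∑ i, ∑ j, (θ b j * θ a i) * (gu i j • (Lam * Lam)) := by
            simp [Finset.sum_mul, smul_mul_assoc, mul_smul_comm]
        _ = ∑ i, ∑ j, (θ b j * θ a i) * (∑ c, ∑ d, gu c d • (e i c * e j d)) := by
            simp_rw [hgtt1]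
        _ = ∑ i, ∑ j, ∑ c, ∑ d, gu c d • (θ b j * ((θ a i * e i c) * e j d)) := by
            simp [Finset.mul_sum, mul_smul_comm, mul_assoc]
        _ = ∑ c, ∑ d, ∑ i, ∑ j, gu c d • (θ b j * ((θ a i * e i c) * e j d)) :=
            sum4_comm _
        _ = ∑ c, ∑ d, ∑ j, ∑ i, gu c d • (θ b j * ((θ a i * e i c) * e j d)) := by
            exact Finset.sum_congr rfl fun c _ =>
              Finset.sum_congr rfl fun d _ => Finset.sum_comm
        _ = ∑ c, ∑ d, ∑ j, gu c d • (θ b j * ((∑ i, θ a i * e i c) * e j d)) := by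
            simp [Finset.smul_sum, Finset.mul_sum, Finset.sum_mul]
        _ = ∑ d, ∑ c, ∑ j, gu c d • (θ b j * ((∑ i, θ a i * e i c) * e j d)) :=
            Finset.sum_comm
        _ = ∑ d, ∑ j, ∑ c, gu c d • (θ b j * ((∑ i, θ a i * e i c) * e j d)) :=
            Finset.sum_congr rfl fun d _ => Finset.sum_comm
        _ = gu a b • (1 : A) := by
            simp_rw [hinv2]
            simp only [mul_ite, ite_mul, mul_one, one_mul, mul_zero, zero_mul,
              smul_ite, smul_zero, Finset.sum_ite_eq, Finset.sum_ite_eq',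
              Finset.mem_univ, if_true]
            simp_rw [← Finset.smul_sum, hinv2]
            simp [Finset.sum_ite_eq, Finset.sum_ite_eq']
    calc (∑ i, ∑ j, gu i j • (θ b j * θ a i))
        = ((∑ i, ∑ j, gu i j • (θ b j * θ a i)) * (Lam * Lam)) * (LamInv * LamInv) := by
          rw [mul_assoc, hLL', mul_one]
      _ = gu a b • (LamInv * LamInv) := by rw [h1]; simp [smul_mul_assoc]
end

section
/- In R_q^3 extended by Λ^{±1}, r^{±1}, (x^0)^{-1}, define e^i_a = [λ_a, x^i] with λ_0 = -q^{-1/2}h^{-1}Λ(x^0)^{-1}, λ_{±1} = γ_{±1}Λ r^{-1}(x^0)^{-1}x^{∓1}, γ_1γ_{-1} = -q^{-1}h^{-2}. Then the normalization e^0_0 e^0_0 = Λ² holds. -/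
/-- In `R_q^3` extended by `Λ^{±1}`, `r^{±1}`, `(x^0)^{-1}`, with
`λ_0 = -q^{-1/2}h^{-1}Λ(x^0)^{-1}`, `λ_{±1} = γ_{±1}Λr^{-1}(x^0)^{-1}x^{∓1}`,
`γ_1γ_{-1} = -q^{-1}h^{-2}`, the matrix entry `e^0_0 = [λ_0, x^0]` satisfies the
normalization `e^0_0 e^0_0 = Λ²`.  Here `s = q^{1/2}`, `h = s - s⁻¹`. -/
theorem e00_normalization_N3
    {A : Type*} [Ring A] [Algebra ℂ A] (s : ℂ) (hs : s ≠ 0)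
    (hh : s - s⁻¹ ≠ 0)
    (xm x0 x1 Lam LamInv r rinv x0inv : A)
    (hrel1 : xm * x0 = (s ^ 2) • (x0 * xm))
    (hrel2 : x0 * x1 = (s ^ 2) • (x1 * x0))
    (hrel3 : x1 * xm - xm * x1 = (s - s⁻¹) • (x0 * x0))
    (hLm : xm * Lam = (s ^ 2) • (Lam * xm))
    (hL0 : x0 * Lam = (s ^ 2) • (Lam * x0))
    (hL1 : x1 * Lam = (s ^ 2) • (Lam * x1))
    (hLinv : Lam * LamInv = 1) (hLinv' : LamInv * Lam = 1)
    (hr2 : r * r = s⁻¹ • (xm * x1) + x0 * x0 + s • (x1 * xm))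
    (hrm : xm * r = r * xm) (hr0 : x0 * r = r * x0) (hr1 : x1 * r = r * x1)
    (hrL : r * Lam = (s ^ 2) • (Lam * r))
    (hrinv : r * rinv = 1) (hrinv' : rinv * r = 1)
    (hx0inv : x0 * x0inv = 1) (hx0inv' : x0inv * x0 = 1)
    (γ0 γ1 γm1 : ℂ)
    (hγ0 : γ0 = -(s⁻¹ * (s - s⁻¹)⁻¹))
    (hγ : γ1 * γm1 = -((s ^ 2)⁻¹ * ((s - s⁻¹) ^ 2)⁻¹)) :
    ∀ lam0 e00 : A,
      lam0 = γ0 • (Lam * x0inv) →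
      e00 = lam0 * x0 - x0 * lam0 →
      e00 * e00 = Lam * Lam := by
  intro lam0 e00 hl he
  subst hl he
  have h1 : γ0 • (Lam * x0inv) * x0 = γ0 • Lam := by
    rw [smul_mul_assoc, mul_assoc, hx0inv', mul_one]
  have h2 : x0 * (γ0 • (Lam * x0inv)) = (γ0 * s ^ 2) • Lam := by
    rw [mul_smul_comm, ← mul_assoc, hL0, smul_mul_assoc, mul_assoc, hx0inv, mul_one,
      smul_smul, mul_comm]
  have hc : γ0 - γ0 * s ^ 2 = 1 := by
    have hs2 : (-1 : ℂ) + s ^ 2 ≠ 0 := by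
      have h' := mul_ne_zero hs hh
      intro h
      apply h'
      rw [mul_sub, mul_inv_cancel₀ hs]
      linear_combination h
    rw [hγ0]
    field_simp
    linear_combination mul_inv_cancel₀ hs2
  have h3 : γ0 • (Lam * x0inv) * x0 - x0 * (γ0 • (Lam * x0inv)) = Lam := by
    rw [h1, h2, ← sub_smul, hc, one_smul]
  rw [h3]
end
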